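/- Let G be a symmetric network congestion game on a series-parallel graph whose delay functions are affine, d_r(x) = a_r·x + b_r with a_r, b_r ≥ 0. Then every 1-lookahead outcome A satisfies SC(A) ≤ (4/3)·SC(B) for every outcome B; in particular the 1-Lookahead Price of Anarchy of G is at most 4/3. -/

import Mathlib

/-- A congestion game with `n` players on a finite resource type `R`:
each player has a finite set of actions (each action a set of resources),
and each resource has a delay function `ℕ → ℝ`. -/
structure CGame (R : Type) [DecidableEq R] [Fintype R] (n : ℕ) where
  actions : Fin n → Finset (Finset R)
  delay : R → ℕ → ℝ

namespace CGame

variable {R : Type} [DecidableEq R] [Fintype R] {n : ℕ}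

/-- The congestion `x(A)_r`: number of players using resource `r` in profile `A`. -/
def congestion (_G : CGame R n) (A : Fin n → Finset R) (r : R) : ℕ :=
  (Finset.univ.filter fun i => r ∈ A i).card

/-- The cost of player `i` in profile `A`. -/
def cost (G : CGame R n) (A : Fin n → Finset R) (i : Fin n) : ℝ :=
  ∑ r ∈ A i, G.delay r (G.congestion A r)

/-- `A` is an outcome: each player plays one of his actions. -/
def IsOutcome (G : CGame R n) (A : Fin n → Finset R) : Prop :=
  ∀ i, A i ∈ G.actions i

/-- `A` is a (pure) Nash equilibrium. -/
def IsNash (G : CGame R n) (A : Fin n → Finset R) : Prop :=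
  G.IsOutcome A ∧ ∀ i, ∀ B ∈ G.actions i, G.cost A i ≤ G.cost (Function.update A i B) i

/-- The subgame induced by the first player playing `a`. -/
def subgame (G : CGame R (n + 1)) (a : Finset R) : CGame R n where
  actions := fun i => G.actions i.succ
  delay := fun r y => G.delay r (y + if r ∈ a then 1 else 0)

/-- The subgame induced by the first `m` players playing `P`. -/
def subgameMany {m k : ℕ} (G : CGame R (m + k)) (P : Fin m → Finset R) : CGame R k where
  actions := fun i => G.actions (Fin.natAdd m i)
  delay := fun r y => G.delay r (y + (Finset.univ.filter fun i : Fin m => r ∈ P i).card)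

/-- `G^k`: the game on the first `min k n` players. -/
def truncate (G : CGame R n) (k : ℕ) : CGame R (min k n) where
  actions := fun i => G.actions (Fin.castLE (min_le_right k n) i)
  delay := G.delay

/-- The game reordered so that the player in position `i` is player `σ i`. -/
def reorder (G : CGame R n) (σ : Equiv.Perm (Fin n)) : CGame R n where
  actions := fun i => G.actions (σ i)
  delay := G.delay

/-- Subgame-perfect outcomes with respect to the order `1, …, n`. -/
def IsSPO : {n : ℕ} → CGame R n → (Fin n → Finset R) → Prop
  | 0, _, _ => True
  | _ + 1, G, A =>
      A 0 ∈ G.actions 0 ∧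
      ∃ f : Finset R → (Fin _ → Finset R),
        (∀ a ∈ G.actions 0, IsSPO (G.subgame a) (f a)) ∧
        f (A 0) = Fin.tail A ∧
        ∀ a ∈ G.actions 0,
          G.cost (Fin.cons (A 0) (f (A 0))) 0 ≤ G.cost (Fin.cons a (f a)) 0

/-- `k`-lookahead outcomes with respect to the order `1, …, n`. -/
def IsKLA (k : ℕ) : {n : ℕ} → CGame R n → (Fin n → Finset R) → Prop
  | 0, _, _ => True
  | n + 1, G, A =>
      (∃ (hk : 0 < min k (n + 1)) (B : Fin (min k (n + 1)) → Finset R),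
          IsSPO (G.truncate k) B ∧ B ⟨0, hk⟩ = A 0) ∧
      IsKLA k (G.subgame (A 0)) (Fin.tail A)

/-- `A` is a subgame-perfect outcome of `G` with respect to some order of the players. -/
def IsSPOutcome (G : CGame R n) (A : Fin n → Finset R) : Prop :=
  ∃ σ : Equiv.Perm (Fin n), IsSPO (G.reorder σ) (A ∘ σ)

/-- `A` is a `k`-lookahead outcome of `G` with respect to some order of the players. -/
def IsKLO (k : ℕ) (G : CGame R n) (A : Fin n → Finset R) : Prop :=
  ∃ σ : Equiv.Perm (Fin n), IsKLA k (G.reorder σ) (A ∘ σ)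

/-- The cost of player `i` when only the players in `s` play (profile restricted to `s`). -/
def costOn (G : CGame R n) (s : Finset (Fin n)) (A : Fin n → Finset R) (i : Fin n) : ℝ :=
  ∑ r ∈ A i, G.delay r ((s.filter fun j => r ∈ A j).card)

/-- `G` is generic: in every restriction of the game to a subset of the players,
a player's cost changes whenever his own action changes. -/
def Generic (G : CGame R n) : Prop :=
  ∀ s : Finset (Fin n), ∀ A B : Fin n → Finset R,
    (∀ i ∈ s, A i ∈ G.actions i) → (∀ i ∈ s, B i ∈ G.actions i) →
    ∀ j ∈ s, A j ≠ B j → G.costOn s A j ≠ G.costOn s B j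

/-- Utilitarian social cost. -/
def SC (G : CGame R n) (A : Fin n → Finset R) : ℝ :=
  ∑ i, G.cost A i

/-- Minimum social cost over all outcomes. -/
noncomputable def optSC (G : CGame R n) : ℝ :=
  sInf {y | ∃ A, G.IsOutcome A ∧ y = G.SC A}

/-- The `k`-Lookahead Price of Anarchy. -/
noncomputable def kLPoA (G : CGame R n) (k : ℕ) : ℝ :=
  sSup {y | ∃ A, IsKLO k G A ∧ y = G.SC A / G.optSC}

/-- The Price of Anarchy. -/
noncomputable def PoA (G : CGame R n) : ℝ :=
  sSup {y | ∃ A, G.IsNash A ∧ y = G.SC A / G.optSC}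

/-- Opportunity cost `O_A` of an outcome `A` in a symmetric game with action set `𝒜`. -/
noncomputable def oppCost (G : CGame R n) (𝒜 : Finset (Finset R)) (A : Fin n → Finset R) : ℝ :=
  sInf {y | ∃ P ∈ 𝒜, y = ∑ r ∈ P, G.delay r (G.congestion A r + 1)}

/-- Worst cost (egalitarian social cost) `W_A` of an outcome `A`. -/
noncomputable def worstCost (G : CGame R n) (A : Fin n → Finset R) : ℝ :=
  sSup {y | ∃ i, y = G.cost A i}

/-- Rosenthal's potential function. -/
def potential (G : CGame R n) (A : Fin n → Finset R) : ℝ :=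
  ∑ r : R, ∑ i ∈ Finset.Icc 1 (G.congestion A r), G.delay r i

end CGame
/-- Syntax trees of extension-parallel graphs: a single arc; parallel composition;
series composition of a single arc with an EP graph (arc first or arc last). -/
inductive EPTree : Type
  | edge : EPTree
  | parallel : EPTree → EPTree → EPTree
  | extHead : EPTree → EPTree
  | extTail : EPTree → EPTree

namespace EPTree

/-- The arcs of an extension-parallel graph. -/
def Arc : EPTree → Type
  | edge => Unit
  | parallel t₁ t₂ => t₁.Arc ⊕ t₂.Arc
  | extHead t => Unit ⊕ t.Arc
  | extTail t => t.Arc ⊕ Unit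

def arcDecEq : (t : EPTree) → DecidableEq t.Arc
  | edge => inferInstanceAs (DecidableEq Unit)
  | parallel t₁ t₂ =>
      letI := t₁.arcDecEq; letI := t₂.arcDecEq
      inferInstanceAs (DecidableEq (t₁.Arc ⊕ t₂.Arc))
  | extHead t =>
      letI := t.arcDecEq
      inferInstanceAs (DecidableEq (Unit ⊕ t.Arc))
  | extTail t =>
      letI := t.arcDecEq
      inferInstanceAs (DecidableEq (t.Arc ⊕ Unit))

instance (t : EPTree) : DecidableEq t.Arc := t.arcDecEq

def arcFintype : (t : EPTree) → Fintype t.Arc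
  | edge => inferInstanceAs (Fintype Unit)
  | parallel t₁ t₂ =>
      letI := t₁.arcFintype; letI := t₂.arcFintype
      inferInstanceAs (Fintype (t₁.Arc ⊕ t₂.Arc))
  | extHead t =>
      letI := t.arcFintype
      inferInstanceAs (Fintype (Unit ⊕ t.Arc))
  | extTail t =>
      letI := t.arcFintype
      inferInstanceAs (Fintype (t.Arc ⊕ Unit))

instance (t : EPTree) : Fintype t.Arc := t.arcFintype

/-- The set of arc sets of directed `o`–`d` paths of an extension-parallel graph. -/
def paths : (t : EPTree) → Finset (Finset t.Arc)
  | edge => {(Finset.univ : Finset Unit)}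
  | parallel t₁ t₂ =>
      (t₁.paths.image fun P => P.image Sum.inl) ∪ (t₂.paths.image fun P => P.image Sum.inr)
  | extHead t => t.paths.image fun P => insert (Sum.inl ()) (P.image Sum.inr)
  | extTail t => t.paths.image fun P => insert (Sum.inr ()) (P.image Sum.inl)

end EPTree

/-- Syntax trees of series-parallel graphs: a single arc; series composition;
parallel composition. -/
inductive SPTree : Type
  | edge : SPTree
  | series : SPTree → SPTree → SPTree
  | parallel : SPTree → SPTree → SPTree

namespace SPTree

/-- The arcs of a series-parallel graph. -/
def Arc : SPTree → Type
  | edge => Unit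
  | series t₁ t₂ => t₁.Arc ⊕ t₂.Arc
  | parallel t₁ t₂ => t₁.Arc ⊕ t₂.Arc

def arcDecEq : (t : SPTree) → DecidableEq t.Arc
  | edge => inferInstanceAs (DecidableEq Unit)
  | series t₁ t₂ =>
      letI := t₁.arcDecEq; letI := t₂.arcDecEq
      inferInstanceAs (DecidableEq (t₁.Arc ⊕ t₂.Arc))
  | parallel t₁ t₂ =>
      letI := t₁.arcDecEq; letI := t₂.arcDecEq
      inferInstanceAs (DecidableEq (t₁.Arc ⊕ t₂.Arc))

instance (t : SPTree) : DecidableEq t.Arc := t.arcDecEq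

def arcFintype : (t : SPTree) → Fintype t.Arc
  | edge => inferInstanceAs (Fintype Unit)
  | series t₁ t₂ =>
      letI := t₁.arcFintype; letI := t₂.arcFintype
      inferInstanceAs (Fintype (t₁.Arc ⊕ t₂.Arc))
  | parallel t₁ t₂ =>
      letI := t₁.arcFintype; letI := t₂.arcFintype
      inferInstanceAs (Fintype (t₁.Arc ⊕ t₂.Arc))

instance (t : SPTree) : Fintype t.Arc := t.arcFintype

/-- The set of arc sets of directed `o`–`d` paths of a series-parallel graph. -/
def paths : (t : SPTree) → Finset (Finset t.Arc)
  | edge => {(Finset.univ : Finset Unit)}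
  | series t₁ t₂ =>
      (t₁.paths ×ˢ t₂.paths).image fun p => p.1.image Sum.inl ∪ p.2.image Sum.inr
  | parallel t₁ t₂ =>
      (t₁.paths.image fun P => P.image Sum.inl) ∪ (t₂.paths.image fun P => P.image Sum.inr)

/-- A series-parallel graph is extension-parallel if in every series composition one of
the two parts is a single arc. -/
def IsEP : SPTree → Prop
  | edge => True
  | series t₁ t₂ => (t₁ = edge ∧ t₂.IsEP) ∨ (t₂ = edge ∧ t₁.IsEP)
  | parallel t₁ t₂ => t₁.IsEP ∧ t₂.IsEP

end SPTree

/-- The symmetric network congestion game with `n` players on an extension-parallel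
graph `t` with delay functions `d`. -/
def SNCGep (t : EPTree) (d : t.Arc → ℕ → ℝ) (n : ℕ) : CGame t.Arc n where
  actions := fun _ => t.paths
  delay := d

/-- The symmetric network congestion game with `n` players on a series-parallel
graph `t` with delay functions `d`. -/
def SNCGsp (t : SPTree) (d : t.Arc → ℕ → ℝ) (n : ℕ) : CGame t.Arc n where
  actions := fun _ => t.paths
  delay := d

/-!
A player with lookahead one sees only himself, so a 1-lookahead outcome is built greedily: in
turn, each player takes a path of least marginal cost `∑ r ∈ P, d r (x r + 1)` on top of the
load `x` of his predecessors. On a series-parallel network with nondecreasing delays, greedy play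
keeps the load vector a minimiser of Rosenthal's potential among all loads of equally many
players: the optimal potential is a sum over series compositions and an infimal convolution over
parallel compositions, hence stays convex. A potential-minimising load `x` moreover satisfies the
exchange inequality `∑ r, (x r - y r)⁺ d r (x r) ≤ ∑ r, (y r - x r)⁺ d r (x r + 1)` against every
load `y` of equally many players. For affine delays this inequality and `x y ≤ y² + x² / 4` give
`SC(x) ≤ SC(y) + SC(x) / 4`.
-/

def IsInfConv (f g h : ℕ → ℝ) : Prop :=
  (∀ i j, h (i + j) ≤ f i + g j) ∧ ∀ m, ∃ i j, i + j = m ∧ h m = f i + g j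

namespace IsInfConv

open scoped fwdDiff

variable {f g h : ℕ → ℝ}

theorem symm (H : IsInfConv f g h) : IsInfConv g f h :=
  ⟨fun i j => by rw [add_comm i, add_comm (g i)]; exact H.1 j i,
    fun m => by
      obtain ⟨i, j, hij, hm⟩ := H.2 m
      exact ⟨j, i, by omega, by rw [hm, add_comm]⟩⟩

theorem fwdDiff_le_left (H : IsInfConv f g h) {i j : ℕ} (hs : h (i + j) = f i + g j) :
    Δ_[1] h (i + j) ≤ Δ_[1] f i := by
  have := H.1 (i + 1) j
  rw [Nat.add_right_comm] at this
  simp only [fwdDiff]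
  linarith

theorem fwdDiff_left_le (H : IsInfConv f g h) {i j : ℕ} (hs : h (i + j) = f i + g j)
    (hi : 0 < i) : Δ_[1] f (i - 1) ≤ Δ_[1] h (i + j - 1) := by
  have := H.1 (i - 1) j
  simp only [fwdDiff]
  rw [Nat.sub_add_cancel hi, Nat.sub_add_cancel (by omega : 1 ≤ i + j)]
  rw [show i - 1 + j = i + j - 1 by omega] at this
  linarith

theorem fwdDiff_le_right (H : IsInfConv f g h) {i j : ℕ} (hs : h (i + j) = f i + g j) :
    Δ_[1] h (i + j) ≤ Δ_[1] g j := by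
  rw [add_comm] at hs ⊢
  exact H.symm.fwdDiff_le_left (by rw [hs, add_comm])

theorem fwdDiff_right_le (H : IsInfConv f g h) {i j : ℕ} (hs : h (i + j) = f i + g j)
    (hj : 0 < j) : Δ_[1] g (j - 1) ≤ Δ_[1] h (i + j - 1) := by
  rw [add_comm i] at hs ⊢
  exact H.symm.fwdDiff_left_le (by rw [hs, add_comm]) hj

theorem min_fwdDiff_le (H : IsInfConv f g h) (hf : Monotone (Δ_[1] f)) (hg : Monotone (Δ_[1] g))
    {i j p q : ℕ} (hs : h (p + q) = f p + g q) (hlt : i + j < p + q) :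
    min (Δ_[1] f i) (Δ_[1] g j) ≤ Δ_[1] h (p + q - 1) := by
  rcases Nat.lt_or_ge i p with hip | hpi
  · exact (min_le_left _ _).trans ((hf (by omega)).trans (H.fwdDiff_left_le hs (by omega)))
  · exact (min_le_right _ _).trans ((hg (by omega)).trans (H.fwdDiff_right_le hs (by omega)))

theorem monotone_fwdDiff (H : IsInfConv f g h) (hf : Monotone (Δ_[1] f))
    (hg : Monotone (Δ_[1] g)) : Monotone (Δ_[1] h) := by
  refine monotone_nat_of_le_succ fun m => ?_
  obtain ⟨i, j, rfl, hs⟩ := H.2 m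
  obtain ⟨p, q, hpq, hs'⟩ := H.2 (i + j + 2)
  rw [← hpq] at hs'
  have key := H.min_fwdDiff_le hf hg hs' (show i + j < p + q by omega)
  rw [hpq, show i + j + 2 - 1 = i + j + 1 by omega] at key
  exact (le_min (H.fwdDiff_le_left hs) (H.fwdDiff_le_right hs)).trans key

end IsInfConv

namespace Congestion

open Finset
open scoped fwdDiff

section LoadVector

variable {R : Type}

def addPath [DecidableEq R] (x : R → ℕ) (P : Finset R) : R → ℕ :=
  fun r => x r + if r ∈ P then 1 else 0

def marginalCost (d : R → ℕ → ℝ) (x : R → ℕ) (P : Finset R) : ℝ := ∑ r ∈ P, d r (x r + 1)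

variable [Fintype R]

def potential (d : R → ℕ → ℝ) (x : R → ℕ) : ℝ := ∑ r, ∑ i ∈ Icc 1 (x r), d r i

/-- The natural-number subtractions are the positive and negative parts of `x r - y r`. -/
def exchangeSum (d : R → ℕ → ℝ) (x y : R → ℕ) : ℝ :=
  ∑ r, (((x r - y r : ℕ) : ℝ) * d r (x r) - ((y r - x r : ℕ) : ℝ) * d r (x r + 1))

variable [DecidableEq R]

def reachable (𝒜 : Finset (Finset R)) : ℕ → Finset (R → ℕ)
  | 0 => {0}
  | m + 1 => (reachable 𝒜 m).biUnion fun x => 𝒜.image (addPath x)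

noncomputable def optPotential (d : R → ℕ → ℝ) (𝒜 : Finset (Finset R)) (m : ℕ) : ℝ :=
  sInf (potential d '' (reachable 𝒜 m : Set (R → ℕ)))

def IsOptimalAt (d : R → ℕ → ℝ) (𝒜 : Finset (Finset R)) (m : ℕ) (x : R → ℕ) : Prop :=
  x ∈ reachable 𝒜 m ∧ potential d x = optPotential d 𝒜 m

variable {d : R → ℕ → ℝ} {𝒜 : Finset (Finset R)} {m : ℕ} {x : R → ℕ}

@[simp]
theorem mem_reachable_zero : x ∈ reachable 𝒜 0 ↔ x = 0 := mem_singleton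

theorem mem_reachable_succ :
    x ∈ reachable 𝒜 (m + 1) ↔ ∃ u ∈ reachable 𝒜 m, ∃ P ∈ 𝒜, addPath u P = x := by
  simp [reachable]

theorem addPath_mem_reachable {u : R → ℕ} (hu : u ∈ reachable 𝒜 m) {P : Finset R} (hP : P ∈ 𝒜) :
    addPath u P ∈ reachable 𝒜 (m + 1) :=
  mem_reachable_succ.2 ⟨u, hu, P, hP, rfl⟩

theorem potential_addPath (d : R → ℕ → ℝ) (x : R → ℕ) (P : Finset R) :
    potential d (addPath x P) = potential d x + marginalCost d x P := by
  have h : ∀ r, ∑ i ∈ Icc 1 (addPath x P r), d r i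
      = ∑ i ∈ Icc 1 (x r), d r i + if r ∈ P then d r (x r + 1) else 0 := by
    intro r
    by_cases hr : r ∈ P <;> simp [addPath, hr, sum_Icc_succ_top]
  simp only [potential, marginalCost, h, sum_add_distrib, sum_ite_mem, univ_inter]

theorem optPotential_le (hx : x ∈ reachable 𝒜 m) : optPotential d 𝒜 m ≤ potential d x :=
  csInf_le ((reachable 𝒜 m).finite_toSet.image _).bddBelow ⟨x, hx, rfl⟩

theorem optPotential_zero (d : R → ℕ → ℝ) (𝒜 : Finset (Finset R)) :
    optPotential d 𝒜 0 = potential d 0 := by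
  simp [optPotential, reachable]

theorem reachable_nonempty (h𝒜 : 𝒜.Nonempty) (m : ℕ) : (reachable 𝒜 m).Nonempty := by
  induction m with
  | zero => exact ⟨0, mem_reachable_zero.2 rfl⟩
  | succ m ih =>
    obtain ⟨P, hP⟩ := h𝒜
    exact ⟨_, addPath_mem_reachable ih.choose_spec hP⟩

theorem exists_isOptimalAt (h𝒜 : 𝒜.Nonempty) (d : R → ℕ → ℝ) (m : ℕ) :
    ∃ x, IsOptimalAt d 𝒜 m x := by
  obtain ⟨x, hx, hmin⟩ := Set.Nonempty.csInf_mem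
    ((coe_nonempty.2 (reachable_nonempty h𝒜 m)).image (potential d))
    ((reachable 𝒜 m).finite_toSet.image _)
  exact ⟨x, hx, hmin⟩

/-- The exchange inequality is stated for every price `θ` between the increments of the optimal
potential on either side of `m`: that is the form which survives series composition (split `θ`
between the factors) and parallel composition (price both branches alike). -/
structure IsGreedyExchange (d : R → ℕ → ℝ) (𝒜 : Finset (Finset R)) : Prop where
  monotone_fwdDiff : Monotone (Δ_[1] (optPotential d 𝒜))
  exists_marginalCost_le {m : ℕ} {x : R → ℕ} : IsOptimalAt d 𝒜 m x →
    ∃ P ∈ 𝒜, marginalCost d x P ≤ Δ_[1] (optPotential d 𝒜) m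
  exchangeSum_le {m m' : ℕ} {x y : R → ℕ} (θ : ℝ) : IsOptimalAt d 𝒜 m x →
    y ∈ reachable 𝒜 m' → (m' < m → Δ_[1] (optPotential d 𝒜) (m - 1) ≤ θ) →
    (m < m' → θ ≤ Δ_[1] (optPotential d 𝒜) m) → exchangeSum d x y ≤ ((m : ℝ) - m') * θ

theorem IsGreedyExchange.isOptimalAt_addPath (H : IsGreedyExchange d 𝒜) (hx : IsOptimalAt d 𝒜 m x)
    {P : Finset R} (hP : P ∈ 𝒜) (hmin : ∀ Q ∈ 𝒜, marginalCost d x P ≤ marginalCost d x Q) :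
    IsOptimalAt d 𝒜 (m + 1) (addPath x P) := by
  obtain ⟨Q, hQ, hQle⟩ := H.exists_marginalCost_le hx
  have hreach := addPath_mem_reachable hx.1 hP
  refine ⟨hreach, le_antisymm ?_ (optPotential_le hreach)⟩
  have := hmin Q hQ
  rw [potential_addPath, hx.2]
  simp only [fwdDiff] at hQle
  linarith

end LoadVector

section SinglePath

variable {R : Type} [DecidableEq R] [Fintype R] {d : R → ℕ → ℝ}

theorem reachable_singleton_univ (m : ℕ) :
    reachable ({univ} : Finset (Finset R)) m = {fun _ => m} := by
  induction m with
  | zero => rfl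
  | succ m ih =>
    simp only [reachable, ih, singleton_biUnion, image_singleton, singleton_inj]
    funext r
    simp [addPath]

theorem optPotential_singleton_univ (d : R → ℕ → ℝ) (m : ℕ) :
    optPotential d {univ} m = ∑ r, ∑ i ∈ Icc 1 m, d r i := by
  simp [optPotential, reachable_singleton_univ, potential]

theorem fwdDiff_optPotential_singleton_univ (d : R → ℕ → ℝ) (m : ℕ) :
    Δ_[1] (optPotential d {univ}) m = ∑ r, d r (m + 1) := by
  simp [fwdDiff, optPotential_singleton_univ, sum_Icc_succ_top, sum_add_distrib]

theorem isGreedyExchange_singleton_univ (hd : ∀ r, Monotone (d r)) :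
    IsGreedyExchange d ({univ} : Finset (Finset R)) where
  monotone_fwdDiff := monotone_nat_of_le_succ fun m => by
    simp only [fwdDiff_optPotential_singleton_univ]
    exact sum_le_sum fun r _ => hd r (by omega)
  exists_marginalCost_le {m x} hx := by
    obtain rfl : x = fun _ => m := by simpa [reachable_singleton_univ] using hx.1
    exact ⟨univ, mem_singleton_self _, by
      simp [marginalCost, fwdDiff_optPotential_singleton_univ]⟩
  exchangeSum_le {m m' x y} θ hx hy hlt hgt := by
    obtain rfl : x = fun _ => m := by simpa [reachable_singleton_univ] using hx.1
    obtain rfl : y = fun _ => m' := by simpa [reachable_singleton_univ] using hy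
    have hE : exchangeSum d (fun _ => m) (fun _ => m')
        = ((m - m' : ℕ) : ℝ) * ∑ r, d r m - ((m' - m : ℕ) : ℝ) * ∑ r, d r (m + 1) := by
      simp [exchangeSum, sum_sub_distrib, mul_sum]
    rcases lt_trichotomy m m' with h | rfl | h
    · obtain ⟨p, rfl⟩ := Nat.exists_eq_add_of_lt h
      have := hgt h
      rw [fwdDiff_optPotential_singleton_univ] at this
      rw [hE, show m - (m + p + 1) = 0 by omega, show m + p + 1 - m = p + 1 by omega]
      push_cast
      nlinarith [(Nat.cast_nonneg (α := ℝ) p)]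
    · simp [exchangeSum]
    · obtain ⟨p, rfl⟩ := Nat.exists_eq_add_of_lt h
      have := hlt h
      rw [show m' + p + 1 - 1 = m' + p by omega, fwdDiff_optPotential_singleton_univ] at this
      rw [hE, show m' - (m' + p + 1) = 0 by omega, show m' + p + 1 - m' = p + 1 by omega]
      push_cast
      nlinarith [(Nat.cast_nonneg (α := ℝ) p)]

end SinglePath

theorem cast_sub_mul_le_cast_sub_mul {m m' : ℕ} {θ θ' : ℝ} (hlt : m' < m → θ' ≤ θ)
    (hgt : m < m' → θ ≤ θ') : ((m : ℝ) - m') * θ' ≤ ((m : ℝ) - m') * θ := by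
  rcases lt_trichotomy m' m with h | rfl | h
  · exact mul_le_mul_of_nonneg_left (hlt h) (sub_nonneg.2 (Nat.cast_le.2 h.le))
  · simp
  · exact mul_le_mul_of_nonpos_left (hgt h) (sub_nonpos.2 (Nat.cast_le.2 h.le))

section Composition

variable {α β : Type}

section

variable [Fintype α] [Fintype β] (d : α ⊕ β → ℕ → ℝ) (x y : α ⊕ β → ℕ)

theorem potential_sum :
    potential d x = potential (d ∘ Sum.inl) (x ∘ Sum.inl) + potential (d ∘ Sum.inr) (x ∘ Sum.inr) :=
  Fintype.sum_sum_type _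

theorem exchangeSum_sum : exchangeSum d x y =
    exchangeSum (d ∘ Sum.inl) (x ∘ Sum.inl) (y ∘ Sum.inl)
      + exchangeSum (d ∘ Sum.inr) (x ∘ Sum.inr) (y ∘ Sum.inr) :=
  Fintype.sum_sum_type _

end

variable [DecidableEq α] [DecidableEq β]

section

variable (P : Finset α) (Q : Finset β)

theorem addPath_elim_union (u : α → ℕ) (v : β → ℕ) : addPath (Sum.elim u v)
    (P.image Sum.inl ∪ Q.image Sum.inr) = Sum.elim (addPath u P) (addPath v Q) := by
  funext r; cases r <;> simp [addPath]

theorem addPath_elim_image_inl (u : α → ℕ) (v : β → ℕ) :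
    addPath (Sum.elim u v) (P.image Sum.inl) = Sum.elim (addPath u P) v := by
  funext r; cases r <;> simp [addPath]

theorem addPath_elim_image_inr (u : α → ℕ) (v : β → ℕ) :
    addPath (Sum.elim u v) (Q.image Sum.inr) = Sum.elim u (addPath v Q) := by
  funext r; cases r <;> simp [addPath]

variable (d : α ⊕ β → ℕ → ℝ) (x : α ⊕ β → ℕ)

theorem marginalCost_image_inl :
    marginalCost d x (P.image Sum.inl) = marginalCost (d ∘ Sum.inl) (x ∘ Sum.inl) P :=
  sum_image Sum.inl_injective.injOn

theorem marginalCost_image_inr :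
    marginalCost d x (Q.image Sum.inr) = marginalCost (d ∘ Sum.inr) (x ∘ Sum.inr) Q :=
  sum_image Sum.inr_injective.injOn

theorem marginalCost_union : marginalCost d x (P.image Sum.inl ∪ Q.image Sum.inr) =
    marginalCost (d ∘ Sum.inl) (x ∘ Sum.inl) P + marginalCost (d ∘ Sum.inr) (x ∘ Sum.inr) Q := by
  rw [marginalCost, sum_union (disjoint_left.2 (by simp)), ← marginalCost, ← marginalCost,
    marginalCost_image_inl, marginalCost_image_inr]

end

def seriesComp (𝒜₁ : Finset (Finset α)) (𝒜₂ : Finset (Finset β)) : Finset (Finset (α ⊕ β)) :=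
  (𝒜₁ ×ˢ 𝒜₂).image fun P => P.1.image Sum.inl ∪ P.2.image Sum.inr

def parallelComp (𝒜₁ : Finset (Finset α)) (𝒜₂ : Finset (Finset β)) : Finset (Finset (α ⊕ β)) :=
  (𝒜₁.image fun P => P.image Sum.inl) ∪ (𝒜₂.image fun P => P.image Sum.inr)

variable {𝒜₁ : Finset (Finset α)} {𝒜₂ : Finset (Finset β)}

theorem seriesComp_nonempty (h₁ : 𝒜₁.Nonempty) (h₂ : 𝒜₂.Nonempty) :
    (seriesComp 𝒜₁ 𝒜₂).Nonempty :=
  (h₁.product h₂).image _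

theorem parallelComp_nonempty (h₁ : 𝒜₁.Nonempty) : (parallelComp 𝒜₁ 𝒜₂).Nonempty :=
  (h₁.image _).mono subset_union_left

variable [Fintype α] [Fintype β] {m : ℕ}

theorem elim_mem_reachable_seriesComp {u : α → ℕ} {v : β → ℕ} :
    Sum.elim u v ∈ reachable (seriesComp 𝒜₁ 𝒜₂) m ↔ u ∈ reachable 𝒜₁ m ∧ v ∈ reachable 𝒜₂ m := by
  induction m generalizing u v with
  | zero => simp [← Sum.elim_zero_zero, Sum.elim_eq_iff]
  | succ m ih =>
    constructor
    · intro h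
      obtain ⟨w, hw, _, hP, hwP⟩ := mem_reachable_succ.1 h
      obtain ⟨⟨P₁, P₂⟩, hP₁₂, rfl⟩ := mem_image.1 hP
      rw [← Sum.elim_comp_inl_inr w] at hw hwP
      rw [addPath_elim_union, Sum.elim_eq_iff] at hwP
      obtain ⟨rfl, rfl⟩ := hwP
      exact ⟨addPath_mem_reachable (ih.1 hw).1 (mem_product.1 hP₁₂).1,
        addPath_mem_reachable (ih.1 hw).2 (mem_product.1 hP₁₂).2⟩
    · rintro ⟨hu, hv⟩
      obtain ⟨u', hu', P₁, hP₁, rfl⟩ := mem_reachable_succ.1 hu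
      obtain ⟨v', hv', P₂, hP₂, rfl⟩ := mem_reachable_succ.1 hv
      rw [← addPath_elim_union]
      exact addPath_mem_reachable (ih.2 ⟨hu', hv'⟩)
        (mem_image.2 ⟨(P₁, P₂), mem_product.2 ⟨hP₁, hP₂⟩, rfl⟩)

theorem elim_mem_reachable_parallelComp {u : α → ℕ} {v : β → ℕ} :
    Sum.elim u v ∈ reachable (parallelComp 𝒜₁ 𝒜₂) m ↔
      ∃ k₁ k₂, k₁ + k₂ = m ∧ u ∈ reachable 𝒜₁ k₁ ∧ v ∈ reachable 𝒜₂ k₂ := by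
  induction m generalizing u v with
  | zero => simp [← Sum.elim_zero_zero, Sum.elim_eq_iff]
  | succ m ih =>
    constructor
    · intro h
      obtain ⟨w, hw, _, hP₀, hwP⟩ := mem_reachable_succ.1 h
      rw [← Sum.elim_comp_inl_inr w] at hw hwP
      obtain ⟨k₁, k₂, hk, hw₁, hw₂⟩ := ih.1 hw
      rcases mem_union.1 hP₀ with hP₀ | hP₀ <;> obtain ⟨P, hP, rfl⟩ := mem_image.1 hP₀
      · rw [addPath_elim_image_inl, Sum.elim_eq_iff] at hwP
        obtain ⟨rfl, rfl⟩ := hwP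
        exact ⟨k₁ + 1, k₂, by omega, addPath_mem_reachable hw₁ hP, hw₂⟩
      · rw [addPath_elim_image_inr, Sum.elim_eq_iff] at hwP
        obtain ⟨rfl, rfl⟩ := hwP
        exact ⟨k₁, k₂ + 1, by omega, hw₁, addPath_mem_reachable hw₂ hP⟩
    · rintro ⟨k₁ | k₁, k₂, hk, hu, hv⟩
      · obtain ⟨v', hv', P, hP, rfl⟩ := mem_reachable_succ.1 (show v ∈ reachable 𝒜₂ (m + 1) by
          rwa [← hk, zero_add])
        rw [← addPath_elim_image_inr]
        exact addPath_mem_reachable (ih.2 ⟨0, m, zero_add m, hu, hv'⟩)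
          (mem_union_right _ (mem_image_of_mem _ hP))
      · obtain ⟨u', hu', P, hP, rfl⟩ := mem_reachable_succ.1 hu
        rw [← addPath_elim_image_inl]
        exact addPath_mem_reachable (ih.2 ⟨k₁, k₂, by omega, hu', hv⟩)
          (mem_union_left _ (mem_image_of_mem _ hP))

variable {d : α ⊕ β → ℕ → ℝ} {x : α ⊕ β → ℕ}

theorem mem_reachable_seriesComp : x ∈ reachable (seriesComp 𝒜₁ 𝒜₂) m ↔
    x ∘ Sum.inl ∈ reachable 𝒜₁ m ∧ x ∘ Sum.inr ∈ reachable 𝒜₂ m := by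
  rw [← elim_mem_reachable_seriesComp, Sum.elim_comp_inl_inr]

theorem mem_reachable_parallelComp : x ∈ reachable (parallelComp 𝒜₁ 𝒜₂) m ↔
    ∃ k₁ k₂, k₁ + k₂ = m ∧ x ∘ Sum.inl ∈ reachable 𝒜₁ k₁ ∧ x ∘ Sum.inr ∈ reachable 𝒜₂ k₂ := by
  rw [← elim_mem_reachable_parallelComp, Sum.elim_comp_inl_inr]

theorem optPotential_seriesComp (h₁ : 𝒜₁.Nonempty) (h₂ : 𝒜₂.Nonempty) :
    optPotential d (seriesComp 𝒜₁ 𝒜₂) =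
      optPotential (d ∘ Sum.inl) 𝒜₁ + optPotential (d ∘ Sum.inr) 𝒜₂ := by
  funext m
  apply le_antisymm
  · obtain ⟨x₁, hx₁⟩ := exists_isOptimalAt h₁ (d ∘ Sum.inl) m
    obtain ⟨x₂, hx₂⟩ := exists_isOptimalAt h₂ (d ∘ Sum.inr) m
    calc optPotential d _ m ≤ potential d (Sum.elim x₁ x₂) :=
          optPotential_le (elim_mem_reachable_seriesComp.2 ⟨hx₁.1, hx₂.1⟩)
      _ = _ := by rw [potential_sum, Sum.elim_comp_inl, Sum.elim_comp_inr, hx₁.2, hx₂.2]; rfl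
  · obtain ⟨x, hx, hopt⟩ := exists_isOptimalAt (seriesComp_nonempty h₁ h₂) d m
    obtain ⟨hx₁, hx₂⟩ := mem_reachable_seriesComp.1 hx
    rw [← hopt, potential_sum]
    exact add_le_add (optPotential_le hx₁) (optPotential_le hx₂)

theorem IsOptimalAt.of_seriesComp (h₁ : 𝒜₁.Nonempty) (h₂ : 𝒜₂.Nonempty)
    (hx : IsOptimalAt d (seriesComp 𝒜₁ 𝒜₂) m x) :
    IsOptimalAt (d ∘ Sum.inl) 𝒜₁ m (x ∘ Sum.inl) ∧
      IsOptimalAt (d ∘ Sum.inr) 𝒜₂ m (x ∘ Sum.inr) := by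
  obtain ⟨hx₁, hx₂⟩ := mem_reachable_seriesComp.1 hx.1
  have hsum := hx.2
  rw [potential_sum, optPotential_seriesComp h₁ h₂, Pi.add_apply] at hsum
  have := optPotential_le (d := d ∘ Sum.inl) hx₁
  have := optPotential_le (d := d ∘ Sum.inr) hx₂
  exact ⟨⟨hx₁, by linarith⟩, ⟨hx₂, by linarith⟩⟩

theorem optPotential_parallelComp_le (h₁ : 𝒜₁.Nonempty) (h₂ : 𝒜₂.Nonempty) (i j : ℕ) :
    optPotential d (parallelComp 𝒜₁ 𝒜₂) (i + j) ≤
      optPotential (d ∘ Sum.inl) 𝒜₁ i + optPotential (d ∘ Sum.inr) 𝒜₂ j := by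
  obtain ⟨x₁, hx₁⟩ := exists_isOptimalAt h₁ (d ∘ Sum.inl) i
  obtain ⟨x₂, hx₂⟩ := exists_isOptimalAt h₂ (d ∘ Sum.inr) j
  calc optPotential d _ (i + j) ≤ potential d (Sum.elim x₁ x₂) :=
        optPotential_le (elim_mem_reachable_parallelComp.2 ⟨i, j, rfl, hx₁.1, hx₂.1⟩)
    _ = _ := by rw [potential_sum, Sum.elim_comp_inl, Sum.elim_comp_inr, hx₁.2, hx₂.2]

theorem IsOptimalAt.of_parallelComp (h₁ : 𝒜₁.Nonempty) (h₂ : 𝒜₂.Nonempty)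
    (hx : IsOptimalAt d (parallelComp 𝒜₁ 𝒜₂) m x) :
    ∃ k₁ k₂, k₁ + k₂ = m ∧ IsOptimalAt (d ∘ Sum.inl) 𝒜₁ k₁ (x ∘ Sum.inl) ∧
      IsOptimalAt (d ∘ Sum.inr) 𝒜₂ k₂ (x ∘ Sum.inr) := by
  obtain ⟨k₁, k₂, rfl, hx₁, hx₂⟩ := mem_reachable_parallelComp.1 hx.1
  have hsum := hx.2
  rw [potential_sum] at hsum
  have := optPotential_parallelComp_le (d := d) h₁ h₂ k₁ k₂
  have := optPotential_le (d := d ∘ Sum.inl) hx₁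
  have := optPotential_le (d := d ∘ Sum.inr) hx₂
  exact ⟨k₁, k₂, rfl, ⟨hx₁, by linarith⟩, ⟨hx₂, by linarith⟩⟩

theorem isInfConv_optPotential_parallelComp (h₁ : 𝒜₁.Nonempty) (h₂ : 𝒜₂.Nonempty) :
    IsInfConv (optPotential (d ∘ Sum.inl) 𝒜₁) (optPotential (d ∘ Sum.inr) 𝒜₂)
      (optPotential d (parallelComp 𝒜₁ 𝒜₂)) := by
  refine ⟨optPotential_parallelComp_le h₁ h₂, fun m => ?_⟩
  obtain ⟨x, hx⟩ := exists_isOptimalAt (parallelComp_nonempty h₁) d m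
  obtain ⟨k₁, k₂, hk, hx₁, hx₂⟩ := hx.of_parallelComp h₁ h₂
  exact ⟨k₁, k₂, hk, by rw [← hx.2, potential_sum, hx₁.2, hx₂.2]⟩

theorem isGreedyExchange_seriesComp (H₁ : IsGreedyExchange (d ∘ Sum.inl) 𝒜₁)
    (H₂ : IsGreedyExchange (d ∘ Sum.inr) 𝒜₂) (h₁ : 𝒜₁.Nonempty) (h₂ : 𝒜₂.Nonempty) :
    IsGreedyExchange d (seriesComp 𝒜₁ 𝒜₂) := by
  have hΔ : Δ_[1] (optPotential d (seriesComp 𝒜₁ 𝒜₂)) =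
      Δ_[1] (optPotential (d ∘ Sum.inl) 𝒜₁) + Δ_[1] (optPotential (d ∘ Sum.inr) 𝒜₂) := by
    rw [optPotential_seriesComp h₁ h₂, fwdDiff_add]
  refine ⟨hΔ ▸ H₁.monotone_fwdDiff.add H₂.monotone_fwdDiff, fun hx => ?_,
    fun {m m' x y} θ hx hy hlt hgt => ?_⟩
  · obtain ⟨hx₁, hx₂⟩ := hx.of_seriesComp h₁ h₂
    obtain ⟨P₁, hP₁, hle₁⟩ := H₁.exists_marginalCost_le hx₁
    obtain ⟨P₂, hP₂, hle₂⟩ := H₂.exists_marginalCost_le hx₂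
    refine ⟨_, mem_image.2 ⟨(P₁, P₂), mem_product.2 ⟨hP₁, hP₂⟩, rfl⟩, ?_⟩
    rw [marginalCost_union, hΔ, Pi.add_apply]
    exact add_le_add hle₁ hle₂
  · obtain ⟨hx₁, hx₂⟩ := hx.of_seriesComp h₁ h₂
    obtain ⟨hy₁, hy₂⟩ := mem_reachable_seriesComp.1 hy
    simp only [hΔ, Pi.add_apply] at hlt hgt
    -- the first factor is priced at its own critical increment, the second one gets the rest
    set θ₁ := if m < m' then Δ_[1] (optPotential (d ∘ Sum.inl) 𝒜₁) m
      else Δ_[1] (optPotential (d ∘ Sum.inl) 𝒜₁) (m - 1)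
    have e₁ := H₁.exchangeSum_le θ₁ hx₁ hy₁ (fun h => by simp [θ₁, not_lt.2 h.le])
      (fun h => by simp [θ₁, h])
    have e₂ := H₂.exchangeSum_le (θ - θ₁) hx₂ hy₂
      (fun h => by have := hlt h; simp only [θ₁, if_neg (not_lt.2 h.le)]; linarith)
      (fun h => by have := hgt h; simp only [θ₁, if_pos h]; linarith)
    calc exchangeSum d x y ≤ ((m : ℝ) - m') * θ₁ + ((m : ℝ) - m') * (θ - θ₁) := by
          rw [exchangeSum_sum]; exact add_le_add e₁ e₂
      _ = ((m : ℝ) - m') * θ := by ring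

theorem exists_marginalCost_le_parallelComp (H₁ : IsGreedyExchange (d ∘ Sum.inl) 𝒜₁)
    (H₂ : IsGreedyExchange (d ∘ Sum.inr) 𝒜₂) (h₁ : 𝒜₁.Nonempty) (h₂ : 𝒜₂.Nonempty)
    (hx : IsOptimalAt d (parallelComp 𝒜₁ 𝒜₂) m x) : ∃ P ∈ parallelComp 𝒜₁ 𝒜₂,
      marginalCost d x P ≤ Δ_[1] (optPotential d (parallelComp 𝒜₁ 𝒜₂)) m := by
  have hC := isInfConv_optPotential_parallelComp (d := d) h₁ h₂
  obtain ⟨k₁, k₂, rfl, hx₁, hx₂⟩ := hx.of_parallelComp h₁ h₂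
  obtain ⟨P₁, hP₁, hle₁⟩ := H₁.exists_marginalCost_le hx₁
  obtain ⟨P₂, hP₂, hle₂⟩ := H₂.exists_marginalCost_le hx₂
  obtain ⟨p, q, hpq, hs⟩ := hC.2 (k₁ + k₂ + 1)
  rw [← hpq] at hs
  have key := hC.min_fwdDiff_le H₁.monotone_fwdDiff H₂.monotone_fwdDiff hs
    (show k₁ + k₂ < p + q by omega)
  rw [hpq, Nat.add_sub_cancel] at key
  rcases min_choice (Δ_[1] (optPotential (d ∘ Sum.inl) 𝒜₁) k₁)
    (Δ_[1] (optPotential (d ∘ Sum.inr) 𝒜₂) k₂) with h | h <;> rw [h] at key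
  · exact ⟨_, mem_union_left _ (mem_image_of_mem _ hP₁),
      (marginalCost_image_inl P₁ d x).trans_le (hle₁.trans key)⟩
  · exact ⟨_, mem_union_right _ (mem_image_of_mem _ hP₂),
      (marginalCost_image_inr P₂ d x).trans_le (hle₂.trans key)⟩

theorem exchangeSum_le_parallelComp (H₁ : IsGreedyExchange (d ∘ Sum.inl) 𝒜₁)
    (H₂ : IsGreedyExchange (d ∘ Sum.inr) 𝒜₂) (h₁ : 𝒜₁.Nonempty) (h₂ : 𝒜₂.Nonempty)
    {m' : ℕ} {y : α ⊕ β → ℕ} (θ : ℝ) (hx : IsOptimalAt d (parallelComp 𝒜₁ 𝒜₂) m x)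
    (hy : y ∈ reachable (parallelComp 𝒜₁ 𝒜₂) m')
    (hlt : m' < m → Δ_[1] (optPotential d (parallelComp 𝒜₁ 𝒜₂)) (m - 1) ≤ θ)
    (hgt : m < m' → θ ≤ Δ_[1] (optPotential d (parallelComp 𝒜₁ 𝒜₂)) m) :
    exchangeSum d x y ≤ ((m : ℝ) - m') * θ := by
  have hC := isInfConv_optPotential_parallelComp (d := d) h₁ h₂
  have hmono := hC.monotone_fwdDiff H₁.monotone_fwdDiff H₂.monotone_fwdDiff
  obtain ⟨k₁, k₂, rfl, hx₁, hx₂⟩ := hx.of_parallelComp h₁ h₂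
  obtain ⟨l₁, l₂, rfl, hy₁, hy₂⟩ := mem_reachable_parallelComp.1 hy
  have hs : optPotential d (parallelComp 𝒜₁ 𝒜₂) (k₁ + k₂) =
      optPotential (d ∘ Sum.inl) 𝒜₁ k₁ + optPotential (d ∘ Sum.inr) 𝒜₂ k₂ := by
    rw [← hx.2, potential_sum, hx₁.2, hx₂.2]
  -- both branches are priced at the same `θ'`, which lies between the two critical
  -- increments of the composite optimum and hence between those of each branch
  set Δc := Δ_[1] (optPotential d (parallelComp 𝒜₁ 𝒜₂))
  set θ' := if l₁ + l₂ < k₁ + k₂ then Δc (k₁ + k₂ - 1) else Δc (k₁ + k₂) with hθ'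
  have hθ'lo : Δc (k₁ + k₂ - 1) ≤ θ' := by
    rw [hθ']; split_ifs
    exacts [le_rfl, hmono (Nat.sub_le _ _)]
  have hθ'hi : θ' ≤ Δc (k₁ + k₂) := by
    rw [hθ']; split_ifs
    exacts [hmono (Nat.sub_le _ _), le_rfl]
  have e₁ := H₁.exchangeSum_le θ' hx₁ hy₁
    (fun _ => (hC.fwdDiff_left_le hs (by omega)).trans hθ'lo)
    (fun _ => hθ'hi.trans (hC.fwdDiff_le_left hs))
  have e₂ := H₂.exchangeSum_le θ' hx₂ hy₂
    (fun _ => (hC.fwdDiff_right_le hs (by omega)).trans hθ'lo)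
    (fun _ => hθ'hi.trans (hC.fwdDiff_le_right hs))
  calc exchangeSum d x y ≤ ((k₁ : ℝ) - l₁) * θ' + ((k₂ : ℝ) - l₂) * θ' := by
        rw [exchangeSum_sum]; exact add_le_add e₁ e₂
    _ = (((k₁ + k₂ : ℕ) : ℝ) - ((l₁ + l₂ : ℕ) : ℝ)) * θ' := by push_cast; ring
    _ ≤ _ := cast_sub_mul_le_cast_sub_mul
      (fun h => by simpa only [θ', if_pos h] using hlt h)
      (fun h => by simpa only [θ', if_neg (lt_asymm h)] using hgt h)

theorem isGreedyExchange_parallelComp (H₁ : IsGreedyExchange (d ∘ Sum.inl) 𝒜₁)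
    (H₂ : IsGreedyExchange (d ∘ Sum.inr) 𝒜₂) (h₁ : 𝒜₁.Nonempty) (h₂ : 𝒜₂.Nonempty) :
    IsGreedyExchange d (parallelComp 𝒜₁ 𝒜₂) where
  monotone_fwdDiff := (isInfConv_optPotential_parallelComp h₁ h₂).monotone_fwdDiff
    H₁.monotone_fwdDiff H₂.monotone_fwdDiff
  exists_marginalCost_le := exists_marginalCost_le_parallelComp H₁ H₂ h₁ h₂
  exchangeSum_le θ := exchangeSum_le_parallelComp H₁ H₂ h₁ h₂ θ

end Composition

section Greedy

variable {R : Type} [DecidableEq R] {n : ℕ}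

def prefixLoad (A : Fin n → Finset R) (i : ℕ) (r : R) : ℕ := #{j : Fin n | (j : ℕ) < i ∧ r ∈ A j}

def IsGreedy (d : R → ℕ → ℝ) (𝒜 : Fin n → Finset (Finset R)) (A : Fin n → Finset R) : Prop :=
  ∀ i, A i ∈ 𝒜 i ∧
    ∀ P ∈ 𝒜 i, marginalCost d (prefixLoad A i) (A i) ≤ marginalCost d (prefixLoad A i) P

@[simp]
theorem prefixLoad_zero (A : Fin n → Finset R) : prefixLoad A 0 = 0 := by
  funext r; simp [prefixLoad]

theorem prefixLoad_succ (A : Fin n → Finset R) {i : ℕ} (hi : i < n) :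
    prefixLoad A (i + 1) = addPath (prefixLoad A i) (A ⟨i, hi⟩) := by
  funext r
  have split : ∀ j : Fin n, (if (j : ℕ) < i + 1 ∧ r ∈ A j then 1 else 0) =
      (if (j : ℕ) < i ∧ r ∈ A j then 1 else 0) +
        if j = ⟨i, hi⟩ then (if r ∈ A j then 1 else 0) else 0 := by
    intro j
    by_cases hj : j = ⟨i, hi⟩
    · subst hj; simp
    · have : (j : ℕ) ≠ i := fun h => hj (Fin.ext h)
      by_cases hr : r ∈ A j
      · simp only [hj, hr, and_true, if_false, add_zero]
        split_ifs <;> omega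
      · simp [hr]
  simp only [prefixLoad, addPath, card_filter, split, sum_add_distrib, sum_ite_eq', mem_univ,
    if_true]

theorem prefixLoad_succ_eq_addPath_tail (A : Fin (n + 1) → Finset R) (i : ℕ) :
    prefixLoad A (i + 1) = addPath (prefixLoad (Fin.tail A) i) (A 0) := by
  funext r
  simp only [prefixLoad, addPath, card_filter]
  simp only [Fin.sum_univ_succ, Fin.val_zero, Fin.val_succ, Fin.tail, Nat.add_lt_add_iff_right,
    Nat.zero_lt_succ, true_and]
  exact add_comm _ _

theorem prefixLoad_mem_reachable [Fintype R] {𝒜 : Finset (Finset R)} {A : Fin n → Finset R}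
    (hA : ∀ j, A j ∈ 𝒜) {i : ℕ} (hi : i ≤ n) : prefixLoad A i ∈ reachable 𝒜 i := by
  induction i with
  | zero => simp
  | succ i ih =>
    rw [prefixLoad_succ A (by omega)]
    exact addPath_mem_reachable (ih (by omega)) (hA _)

theorem IsGreedyExchange.isOptimalAt_prefixLoad [Fintype R] {d : R → ℕ → ℝ}
    {𝒜 : Finset (Finset R)} (H : IsGreedyExchange d 𝒜) {A : Fin n → Finset R}
    (hA : IsGreedy d (fun _ => 𝒜) A) {i : ℕ} (hi : i ≤ n) :
    IsOptimalAt d 𝒜 i (prefixLoad A i) := by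
  induction i with
  | zero => exact ⟨by simp, by rw [prefixLoad_zero, optPotential_zero]⟩
  | succ i ih =>
    rw [prefixLoad_succ A (by omega)]
    exact H.isOptimalAt_addPath (ih (by omega)) (hA ⟨i, _⟩).1 (hA ⟨i, _⟩).2

end Greedy

/-- The constant `1 / 4` comes from `x y ≤ y ^ 2 + x ^ 2 / 4`, i.e. `(y - x / 2) ^ 2 ≥ 0`. -/
theorem affine_smoothness {a b : ℝ} (ha : 0 ≤ a) (hb : 0 ≤ b) (x y : ℕ) :
    (x : ℝ) * (a * x + b) ≤ y * (a * y + b) + x * (a * x + b) / 4 +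
      (((x - y : ℕ) : ℝ) * (a * x + b) - ((y - x : ℕ) : ℝ) * (a * ((x + 1 : ℕ) : ℝ) + b)) := by
  rcases le_or_gt y x with h | h
  · obtain ⟨k, rfl⟩ := Nat.exists_eq_add_of_le h
    rw [show y - (y + k) = 0 by omega, Nat.add_sub_cancel_left]
    push_cast
    nlinarith [mul_nonneg ha (sq_nonneg ((k : ℝ) - y)), mul_nonneg hb (Nat.cast_nonneg (α := ℝ) y),
      mul_nonneg hb (Nat.cast_nonneg (α := ℝ) k)]
  · obtain ⟨k, rfl⟩ := Nat.exists_eq_add_of_lt h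
    rw [show x - (x + k + 1) = 0 by omega, show x + k + 1 - x = k + 1 by omega]
    push_cast
    nlinarith [mul_nonneg ha (sq_nonneg ((x : ℝ) / 2 + k)),
      mul_nonneg hb (Nat.cast_nonneg (α := ℝ) x),
      mul_nonneg ha (mul_nonneg (Nat.cast_nonneg (α := ℝ) k) (Nat.cast_nonneg (α := ℝ) x)),
      mul_nonneg ha (mul_nonneg (Nat.cast_nonneg (α := ℝ) k) (Nat.cast_nonneg (α := ℝ) k))]

theorem sum_affine_le_four_thirds {R : Type} [Fintype R] {a b : R → ℝ} (ha : ∀ r, 0 ≤ a r)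
    (hb : ∀ r, 0 ≤ b r) {x y : R → ℕ} (h : exchangeSum (fun r k => a r * k + b r) x y ≤ 0) :
    ∑ r, (x r : ℝ) * (a r * x r + b r) ≤ 4 / 3 * ∑ r, (y r : ℝ) * (a r * y r + b r) := by
  have := sum_le_sum fun r (_ : r ∈ univ) => affine_smoothness (ha r) (hb r) (x r) (y r)
  rw [sum_add_distrib, sum_add_distrib, ← sum_div] at this
  unfold exchangeSum at h
  linarith

end Congestion

namespace SPTree

open Congestion

theorem paths_nonempty : ∀ t : SPTree, t.paths.Nonempty
  | edge => Finset.singleton_nonempty _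
  | series t₁ t₂ => seriesComp_nonempty t₁.paths_nonempty t₂.paths_nonempty
  | parallel t₁ _ => parallelComp_nonempty t₁.paths_nonempty

theorem isGreedyExchange (t : SPTree) {d : t.Arc → ℕ → ℝ} (hd : ∀ r, Monotone (d r)) :
    IsGreedyExchange d t.paths := by
  induction t with
  | edge => exact isGreedyExchange_singleton_univ hd
  | series t₁ t₂ ih₁ ih₂ =>
    exact isGreedyExchange_seriesComp (ih₁ fun r => hd (.inl r)) (ih₂ fun r => hd (.inr r))
      t₁.paths_nonempty t₂.paths_nonempty
  | parallel t₁ t₂ ih₁ ih₂ =>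
    exact isGreedyExchange_parallelComp (ih₁ fun r => hd (.inl r)) (ih₂ fun r => hd (.inr r))
      t₁.paths_nonempty t₂.paths_nonempty

end SPTree

namespace CGame

open Congestion Finset

variable {R : Type} [DecidableEq R] [Fintype R] {n : ℕ}

theorem cost_zero_of_one_player (G : CGame R 1) (A : Fin 1 → Finset R) :
    G.cost A 0 = ∑ r ∈ A 0, G.delay r 1 := by
  refine sum_congr rfl fun r hr => ?_
  simp [congestion, filter_singleton, hr]

theorem IsSPO.one_player {G : CGame R 1} {B : Fin 1 → Finset R} (h : G.IsSPO B) :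
    B 0 ∈ G.actions 0 ∧
      ∀ P ∈ G.actions 0, marginalCost G.delay 0 (B 0) ≤ marginalCost G.delay 0 P := by
  obtain ⟨hB, _, -, -, hmin⟩ := h
  refine ⟨hB, fun P hP => ?_⟩
  simpa [cost_zero_of_one_player, marginalCost] using hmin P hP

theorem marginalCost_subgame (G : CGame R (n + 1)) (a : Finset R) (x : R → ℕ)
    (P : Finset R) : marginalCost (G.subgame a).delay x P = marginalCost G.delay (addPath x a) P :=
  sum_congr rfl fun r _ => by simp only [subgame, addPath, Nat.add_right_comm]

theorem IsKLA.isGreedy {G : CGame R n} {A : Fin n → Finset R} (h : IsKLA 1 G A) :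
    IsGreedy G.delay G.actions A := by
  induction n with
  | zero => exact fun i => i.elim0
  | succ n ih =>
    obtain ⟨⟨_, B, hB, hB0⟩, htail⟩ := h
    obtain ⟨hmem, hmin⟩ := IsSPO.one_player hB
    refine Fin.cases ⟨?_, fun P hP => ?_⟩ (fun j => ?_)
    · rw [← hB0]
      exact hmem
    · rw [← hB0, Fin.val_zero, prefixLoad_zero]
      exact hmin P hP
    · obtain ⟨hmem', hmin'⟩ := ih htail j
      refine ⟨hmem', fun P hP => ?_⟩
      rw [Fin.val_succ, prefixLoad_succ_eq_addPath_tail, ← marginalCost_subgame,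
        ← marginalCost_subgame]
      exact hmin' P hP

theorem congestion_eq_prefixLoad (G : CGame R n) (A : Fin n → Finset R) :
    G.congestion A = prefixLoad A n := by
  funext r; simp [congestion, prefixLoad]

theorem congestion_comp_perm (G : CGame R n) (A : Fin n → Finset R) (σ : Equiv.Perm (Fin n)) :
    G.congestion (A ∘ σ) = G.congestion A := by
  funext r
  simp only [congestion, card_filter, Function.comp]
  exact Equiv.sum_comp σ fun i => if r ∈ A i then 1 else 0

theorem SC_eq_sum_congestion (G : CGame R n) (A : Fin n → Finset R) :
    G.SC A = ∑ r, (G.congestion A r : ℝ) * G.delay r (G.congestion A r) := by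
  simp only [SC, cost]
  rw [sum_comm' (t' := univ) (s' := fun r => {i | r ∈ A i}) (by simp)]
  simp [congestion]

theorem SC_comp_perm (G : CGame R n) (A : Fin n → Finset R) (σ : Equiv.Perm (Fin n)) :
    G.SC (A ∘ σ) = G.SC A := by
  rw [SC_eq_sum_congestion, SC_eq_sum_congestion, congestion_comp_perm]

end CGame

/-- For an SNCG on a series-parallel graph with affine delay functions
`d_r(x) = a_r·x + b_r` (`a_r, b_r ≥ 0`), every 1-lookahead outcome `A` satisfies
`SC(A) ≤ (4/3)·SC(B)` for every outcome `B`. -/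
theorem sp_affine_one_lookahead_four_thirds (t : SPTree)
    (a b : t.Arc → ℝ) (ha : ∀ r, 0 ≤ a r) (hb : ∀ r, 0 ≤ b r) (n : ℕ)
    (A : Fin n → Finset t.Arc)
    (hA : CGame.IsKLO 1 (SNCGsp t (fun r x => a r * (x : ℝ) + b r) n) A)
    (B : Fin n → Finset t.Arc)
    (hB : CGame.IsOutcome (SNCGsp t (fun r x => a r * (x : ℝ) + b r) n) B) :
    CGame.SC (SNCGsp t (fun r x => a r * (x : ℝ) + b r) n) A ≤
      (4 / 3) * CGame.SC (SNCGsp t (fun r x => a r * (x : ℝ) + b r) n) B := by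
  obtain ⟨σ, hσ⟩ := hA
  have H := t.isGreedyExchange (d := fun r x => a r * (x : ℝ) + b r) fun r i j hij =>
    add_le_add_left (mul_le_mul_of_nonneg_left (Nat.cast_le.2 hij) (ha r)) _
  have hx := H.isOptimalAt_prefixLoad hσ.isGreedy le_rfl
  have hE := H.exchangeSum_le 0 hx (Congestion.prefixLoad_mem_reachable hB le_rfl)
    (by simp) (by simp)
  rw [← CGame.SC_comp_perm _ A σ, CGame.SC_eq_sum_congestion, CGame.SC_eq_sum_congestion,
    CGame.congestion_eq_prefixLoad, CGame.congestion_eq_prefixLoad]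
  exact Congestion.sum_affine_le_four_thirds ha hb (by simpa using hE)
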